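/- Let ψ : ℝ → ℝ be locally absolutely continuous and let S ⊆ ℝ. If the image ψ(S) has one-dimensional Lebesgue outer measure zero, then ψ'(t) = 0 for Lebesgue-almost every t ∈ S. -/

import Mathlib

/-!
A locally absolutely continuous function has locally bounded variation, hence is differentiable
almost everywhere. Where the derivative exists and is nonzero, the function is, on each piece of a
countable partition, close to an invertible linear map and so expands measure by a positive
factor; a null image therefore forces that part of `S` to be null.
-/

open MeasureTheory Set
open scoped NNReal ENNReal

section AddHaar

variable {E : Type*} [NormedAddCommGroup E] [NormedSpace ℝ E] [FiniteDimensional ℝ E]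
  [MeasurableSpace E] [BorelSpace E] (μ : Measure E) [μ.IsAddHaarMeasure]

theorem addHaar_eq_zero_of_image_eq_zero_of_det_ne_zero {f : E → E} {f' : E → E →L[ℝ] E}
    {s : Set E} (hf' : ∀ x ∈ s, HasFDerivWithinAt f (f' x) s x)
    (hdet : ∀ x ∈ s, (f' x).det ≠ 0) (hs : μ (f '' s) = 0) : μ s = 0 := by
  have expanding : ∀ A : E →L[ℝ] E, ∃ δ : ℝ≥0, 0 < δ ∧ (A.det ≠ 0 → ∃ m : ℝ≥0, 0 < m ∧
      ∀ t, ApproximatesLinearOn f A t δ → (m : ℝ≥0∞) * μ t ≤ μ (f '' t)) := by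
    intro A
    by_cases hA : A.det = 0
    · exact ⟨1, one_pos, fun h => absurd hA h⟩
    obtain ⟨m, hm0, hm⟩ := ENNReal.lt_iff_exists_nnreal_btwn.1
      (ENNReal.ofReal_pos.2 (abs_pos.2 hA))
    obtain ⟨δ, hδ, hδpos⟩ :=
      ((mul_le_addHaar_image_of_lt_det μ A hm).and self_mem_nhdsWithin).exists
    exact ⟨δ, hδpos, fun _ => ⟨m, ENNReal.coe_pos.1 hm0, fun t ht => hδ t f ht⟩⟩
  choose δ hδpos hδ using expanding
  obtain ⟨t, A, -, -, hst, hA, hAf'⟩ :=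
    exists_partition_approximatesLinearOn_of_hasFDerivWithinAt f s f' hf' δ fun A => (hδpos A).ne'
  rcases s.eq_empty_or_nonempty with rfl | hne
  · exact measure_empty
  refine measure_mono_null ((subset_inter subset_rfl hst).trans (inter_iUnion s t).subset)
    (measure_iUnion_null fun n => ?_)
  obtain ⟨y, hy, hAy⟩ := hAf' hne n
  obtain ⟨m, hm, hexp⟩ := hδ (A n) (hAy ▸ hdet y hy)
  have hle : (m : ℝ≥0∞) * μ (s ∩ t n) ≤ 0 :=
    (hexp _ (hA n)).trans (measure_mono_null (image_mono inter_subset_left) hs).le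
  exact (mul_eq_zero.1 (nonpos_iff_eq_zero.1 hle)).resolve_left (ENNReal.coe_ne_zero.2 hm.ne')

end AddHaar

theorem ae_hasDerivAt_zero_of_volume_image_eq_zero {f : ℝ → ℝ} {S : Set ℝ}
    (hf : ∀ᵐ x, DifferentiableAt ℝ f x) (hS : volume (f '' S) = 0) :
    ∀ᵐ x, x ∈ S → HasDerivAt f 0 x := by
  set s := {x ∈ S | DifferentiableAt ℝ f x ∧ deriv f x ≠ 0}
  have hs : volume s = 0 :=
    addHaar_eq_zero_of_image_eq_zero_of_det_ne_zero volume
      (f' := fun x => ContinuousLinearMap.toSpanSingleton ℝ (deriv f x))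
      (fun x hx => hx.2.1.hasDerivAt.hasFDerivAt.hasFDerivWithinAt)
      (fun x hx => by simpa only [ContinuousLinearMap.det_toSpanSingleton] using hx.2.2)
      (measure_mono_null (image_mono (sep_subset S _)) hS)
  filter_upwards [hf, measure_eq_zero_iff_ae_notMem.1 hs] with x hdiff hxs hxS
  have hderiv : deriv f x = 0 := by
    by_contra h
    exact hxs ⟨hxS, hdiff, h⟩
  exact hderiv ▸ hdiff.hasDerivAt

lemma abs_sub_max_min_eq_dist (g : ℝ → ℝ) (x y : ℝ) :
    |g (max x y) - g (min x y)| = dist (g x) (g y) := by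
  rcases le_total x y with h | h
  · simp [h, Real.dist_eq, abs_sub_comm]
  · simp [h, Real.dist_eq]

theorem absolutelyContinuousOnInterval_of_sum_fin {f : ℝ → ℝ} {a b : ℝ} (hab : a ≤ b)
    (hf : ∀ ε > (0 : ℝ), ∃ δ > (0 : ℝ),
      ∀ n : ℕ, ∀ I : Fin n → ℝ × ℝ,
        (∀ k, a ≤ (I k).1 ∧ (I k).1 ≤ (I k).2 ∧ (I k).2 ≤ b) →
        (∀ k l, k ≠ l → Disjoint (Ioo (I k).1 (I k).2) (Ioo (I l).1 (I l).2)) →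
        (∑ k, ((I k).2 - (I k).1)) < δ →
        (∑ k, |f (I k).2 - f (I k).1|) < ε) :
    AbsolutelyContinuousOnInterval f a b := by
  rw [absolutelyContinuousOnInterval_iff]
  intro ε hε
  obtain ⟨δ, hδ, hfδ⟩ := hf ε hε
  refine ⟨δ, hδ, fun ⟨n, I⟩ ⟨hmem, hdisj⟩ hlen => ?_⟩
  have hsum (g : ℝ → ℝ) : ∑ k : Fin n, |g (max (I k).1 (I k).2) - g (min (I k).1 (I k).2)| =
      ∑ i ∈ Finset.range n, dist (g (I i).1) (g (I i).2) := by
    simp only [abs_sub_max_min_eq_dist]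
    exact Fin.sum_univ_eq_sum_range (fun i => dist (g (I i).1) (g (I i).2)) n
  rw [← hsum f]
  refine hfδ n (fun k => (min (I k).1 (I k).2, max (I k).1 (I k).2)) (fun k => ?_)
    (fun k l hkl => ?_) ?_
  · obtain ⟨h1, h2⟩ := hmem k (Finset.mem_range.2 k.isLt)
    rw [uIcc_of_le hab] at h1 h2
    exact ⟨le_min h1.1 h2.1, min_le_max, max_le h1.2 h2.2⟩
  · exact (hdisj (Finset.mem_range.2 k.isLt) (Finset.mem_range.2 l.isLt)
      (Fin.val_injective.ne hkl)).mono Ioo_subset_Ioc_self Ioo_subset_Ioc_self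
  · simpa only [id, abs_of_nonneg (sub_nonneg.2 min_le_max)] using (hsum id).trans_lt hlen

theorem locallyBoundedVariationOn_univ_of_absolutelyContinuousOnInterval {f : ℝ → ℝ}
    (hf : ∀ a b, a ≤ b → AbsolutelyContinuousOnInterval f a b) :
    LocallyBoundedVariationOn f univ := by
  intro a b _ _
  rw [univ_inter]
  rcases le_or_gt a b with hab | hab
  · simpa only [uIcc_of_le hab] using (hf a b hab).boundedVariationOn
  · simp [BoundedVariationOn, Icc_eq_empty_of_lt hab]

/-- If `ψ : ℝ → ℝ` is locally absolutely continuous (absolutely continuous on every compact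
interval, in the classical ε-δ sense) and `S ⊆ ℝ` is such that the image `ψ(S)` has
one-dimensional Lebesgue (outer) measure zero, then for Lebesgue-a.e. `t ∈ S` the derivative
`ψ'(t)` exists and equals `0`. -/
theorem deriv_zero_ae_of_image_null (ψ : ℝ → ℝ)
    (hAC : ∀ a b : ℝ, a ≤ b → ∀ ε > (0 : ℝ), ∃ δ > (0 : ℝ),
      ∀ n : ℕ, ∀ I : Fin n → ℝ × ℝ,
        (∀ k, a ≤ (I k).1 ∧ (I k).1 ≤ (I k).2 ∧ (I k).2 ≤ b) →
        (∀ k l, k ≠ l → Disjoint (Set.Ioo (I k).1 (I k).2) (Set.Ioo (I l).1 (I l).2)) →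
        (∑ k, ((I k).2 - (I k).1)) < δ →
        (∑ k, |ψ (I k).2 - ψ (I k).1|) < ε)
    (S : Set ℝ) (hS : volume (ψ '' S) = 0) :
    ∀ᵐ t : ℝ, t ∈ S → HasDerivAt ψ 0 t := by
  have hBV : LocallyBoundedVariationOn ψ univ :=
    locallyBoundedVariationOn_univ_of_absolutelyContinuousOnInterval fun a b hab =>
      absolutelyContinuousOnInterval_of_sum_fin hab (hAC a b hab)
  exact ae_hasDerivAt_zero_of_volume_image_eq_zero hBV.ae_differentiableAt hS
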